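/- Any two homomorphisms between Archimedean magnitude spaces that agree at one point are equal: if φ, χ : M → M' are homomorphisms and φa = χa for some a, then φ = χ. More generally, φa has to χa the same order relation (<, =, >) as φb has to χb for all a, b. -/
import Mathlib


/-- A magnitude space: nonempty, associative, commutative `+` with trichotomy. -/
class MagnitudeSpace (M : Type*) extends Add M where
  nonempty : Nonempty M
  add_assoc' : ∀ a b c : M, a + (b + c) = (a + b) + c
  add_comm' : ∀ a b : M, a + b = b + a
  trichotomy : ∀ a b : M,
    ((∃ d, a = b + d) ∧ a ≠ b ∧ ¬ (∃ d, b = a + d)) ∨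
    (¬ (∃ d, a = b + d) ∧ a = b ∧ ¬ (∃ d, b = a + d)) ∨
    (¬ (∃ d, a = b + d) ∧ a ≠ b ∧ (∃ d, b = a + d))

variable {M : Type*}

/-- `a` is less than `b` iff `b = a + d` for some `d`. -/
def mlt [MagnitudeSpace M] (a b : M) : Prop := ∃ d, b = a + d

/-- `a ≤ b` iff `a < b` or `a = b`. -/
def mle [MagnitudeSpace M] (a b : M) : Prop := mlt a b ∨ a = b

/-- `nsm n a` is the `(n+1)`-fold sum of `a`; as `n` ranges over `ℕ` this
gives exactly the positive integral multiples of `a`. -/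
def nsm [MagnitudeSpace M] : ℕ → M → M
  | 0, a => a
  | n + 1, a => nsm n a + a

section Helpers

variable {N : Type*} [MagnitudeSpace N]

instance (priority := 100) : AddCommSemigroup N :=
  { (inferInstance : Add N) with
    add_assoc := fun a b c => (MagnitudeSpace.add_assoc' a b c).symm
    add_comm := MagnitudeSpace.add_comm' }

theorem mlt_irrefl (a : N) : ¬ mlt a a := by
  rcases MagnitudeSpace.trichotomy a a with ⟨_, h, _⟩ | ⟨h, _, _⟩ | ⟨_, h, _⟩
  · exact absurd rfl h
  · exact h
  · exact absurd rfl h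

theorem mlt_trans {a b c : N} (h1 : mlt a b) (h2 : mlt b c) : mlt a c := by
  obtain ⟨d, hd⟩ := h1
  obtain ⟨e, he⟩ := h2
  exact ⟨d + e, by rw [he, hd, add_assoc]⟩

theorem mlt_asymm {a b : N} (h1 : mlt a b) (h2 : mlt b a) : False :=
  mlt_irrefl a (mlt_trans h1 h2)

theorem mlt_mle_trans {a b c : N} (h1 : mlt a b) (h2 : mle b c) : mlt a c := by
  rcases h2 with h2 | h2
  · exact mlt_trans h1 h2
  · rwa [h2] at h1

theorem mle_mlt_asymm {a b : N} (h1 : mle a b) (h2 : mlt b a) : False := by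
  rcases h1 with h1 | h1
  · exact mlt_asymm h1 h2
  · rw [h1] at h2; exact mlt_irrefl b h2

theorem mlt_add (a b : N) : mlt a (a + b) := ⟨b, rfl⟩

theorem mlt_add' (a b : N) : mlt a (b + a) := ⟨b, add_comm b a⟩

theorem cancel_left {c a b : N} (h : c + a = c + b) : a = b := by
  rcases MagnitudeSpace.trichotomy a b with ⟨⟨d, hd⟩, _, _⟩ | ⟨_, h2, _⟩ | ⟨_, _, ⟨d, hd⟩⟩
  · -- a = b + d
    exfalso
    apply mlt_irrefl (c + a)
    refine ⟨d, ?_⟩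
    calc c + a = c + (b + d) := by rw [hd]
    _ = (c + b) + d := (add_assoc _ _ _).symm
    _ = (c + a) + d := by rw [← h]
  · exact h2
  · -- b = a + d
    exfalso
    apply mlt_irrefl (c + a)
    refine ⟨d, ?_⟩
    calc c + a = c + b := h
    _ = c + (a + d) := by rw [hd]
    _ = (c + a) + d := (add_assoc _ _ _).symm

theorem mlt_of_add_mlt {c a b : N} (h : mlt (c + a) (c + b)) : mlt a b := by
  obtain ⟨d, hd⟩ := h
  refine ⟨d, cancel_left (c := c) ?_⟩
  rw [hd, add_assoc]

theorem mlt_of_not_mle {a b : N} (h : ¬ mle a b) : mlt b a := by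
  rcases MagnitudeSpace.trichotomy a b with ⟨h1, _, _⟩ | ⟨_, h2, _⟩ | ⟨_, _, h3⟩
  · exact h1
  · exact absurd (Or.inr h2) h
  · exact absurd (Or.inl h3) h

theorem mlt_add_right {a b : N} (c : N) (h : mlt a b) : mlt (a + c) (b + c) := by
  obtain ⟨d, hd⟩ := h
  exact ⟨d, by rw [hd, add_right_comm]⟩

theorem add_mlt_left {a b : N} (c : N) (h : mlt a b) : mlt (c + a) (c + b) := by
  obtain ⟨d, hd⟩ := h
  exact ⟨d, by rw [hd, add_assoc]⟩

theorem mle_add_mle {a b u v : N} (h1 : mle a b) (h2 : mle u v) :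
    mle (a + u) (b + v) := by
  rcases h1 with h1 | h1 <;> rcases h2 with h2 | h2
  · exact Or.inl (mlt_trans (mlt_add_right u h1) (add_mlt_left b h2))
  · exact Or.inl (by rw [h2]; exact mlt_add_right v h1)
  · exact Or.inl (by rw [h1]; exact add_mlt_left b h2)
  · exact Or.inr (by rw [h1, h2])

theorem nsm_succ (n : ℕ) (a : N) : nsm (n + 1) a = nsm n a + a := rfl

theorem nsm_add (n : ℕ) (a b : N) : nsm n (a + b) = nsm n a + nsm n b := by
  induction n with
  | zero => rfl
  | succ n ih =>
      rw [nsm_succ, nsm_succ, nsm_succ, ih]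
      simp only [add_assoc, add_comm, add_left_comm]

theorem nsm_mle {a b : N} (h : mle a b) (n : ℕ) : mle (nsm n a) (nsm n b) := by
  induction n with
  | zero => exact h
  | succ n ih => exact mle_add_mle ih h

end Helpers

section HomHelpers

variable {N N' : Type*} [MagnitudeSpace N] [MagnitudeSpace N'] (φ : N → N')

theorem hom_mlt (hφ : ∀ x y : N, φ (x + y) = φ x + φ y) {a b : N} (h : mlt a b) : mlt (φ a) (φ b) := by
  obtain ⟨d, hd⟩ := h
  exact ⟨φ d, by rw [hd, hφ]⟩

theorem hom_mle (hφ : ∀ x y : N, φ (x + y) = φ x + φ y) {a b : N} (h : mle a b) : mle (φ a) (φ b) := by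
  rcases h with h | h
  · exact Or.inl (hom_mlt φ hφ h)
  · exact Or.inr (by rw [h])

theorem hom_nsm (hφ : ∀ x y : N, φ (x + y) = φ x + φ y) (n : ℕ) (a : N) : φ (nsm n a) = nsm n (φ a) := by
  induction n with
  | zero => rfl
  | succ n ih => rw [nsm_succ, nsm_succ, hφ, ih]

end HomHelpers

/-- Key lemma: if `φ a ≤ χ a` at some point `a` but `χ b < φ b` at some
point `b`, we get a contradiction. -/
theorem key_lemma {N N' : Type*} [MagnitudeSpace N] [MagnitudeSpace N']
    (harch : ∀ x y : N, ∃ n : ℕ, mlt y (nsm n x))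
    (harch' : ∀ x y : N', ∃ n : ℕ, mlt y (nsm n x))
    (φ χ : N → N') (hφ : ∀ x y : N, φ (x + y) = φ x + φ y)
    (hχ : ∀ x y : N, χ (x + y) = χ x + χ y)
    {a b : N} (ha : mle (φ a) (χ a)) (hb : mlt (χ b) (φ b)) : False := by
  obtain ⟨e, he⟩ := hb
  obtain ⟨n, hn⟩ := harch' e (χ a)
  have hkey : φ (nsm n b) = χ (nsm n b) + nsm n e := by
    rw [hom_nsm φ hφ, hom_nsm χ hχ, he, nsm_add]
  have hall : ∀ m, mle (nsm m a) (nsm n b) := by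
    intro m
    induction m with
    | zero =>
        by_contra hcon
        have h1 : mlt (nsm n b) a := mlt_of_not_mle hcon
        have h3 : mlt (φ (nsm n b)) (χ a) := mlt_mle_trans (hom_mlt φ hφ h1) ha
        have h4 : mlt (χ a) (φ (nsm n b)) := by
          rw [hkey]
          exact mlt_trans hn (mlt_add' (nsm n e) (χ (nsm n b)))
        exact mlt_asymm h3 h4
    | succ m ih =>
        by_contra hcon
        have h1 : mlt (nsm n b) (nsm (m + 1) a) := mlt_of_not_mle hcon
        have h2 : mlt (φ (nsm n b)) (nsm m (χ a) + χ a) := by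
          have h2a := hom_mlt φ hφ h1
          rw [hom_nsm φ hφ (m + 1) a, nsm_succ] at h2a
          exact mlt_mle_trans h2a (mle_add_mle (nsm_mle ha m) ha)
        have h3 : mle (nsm m (χ a) + χ a) (χ (nsm n b) + χ a) := by
          refine mle_add_mle ?_ (Or.inr rfl)
          rw [← hom_nsm χ hχ]
          exact hom_mle χ hχ ih
        have h4 : mlt (φ (nsm n b)) (χ (nsm n b) + χ a) := mlt_mle_trans h2 h3
        rw [hkey] at h4
        exact mlt_asymm (mlt_of_add_mlt h4) hn
  obtain ⟨m, hm⟩ := harch a (nsm n b)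
  exact mle_mlt_asymm (hall m) hm

theorem stmt_17 {M' : Type*} [MagnitudeSpace M] [MagnitudeSpace M']
    (harch : ∀ x y : M, ∃ n : ℕ, mlt y (nsm n x))
    (harch' : ∀ x y : M', ∃ n : ℕ, mlt y (nsm n x))
    (φ χ : M → M') (hφ : ∀ x y : M, φ (x + y) = φ x + φ y)
    (hχ : ∀ x y : M, χ (x + y) = χ x + χ y) :
    (∀ a b : M,
      (mlt (φ a) (χ a) ↔ mlt (φ b) (χ b)) ∧
      (φ a = χ a ↔ φ b = χ b) ∧
      (mlt (χ a) (φ a) ↔ mlt (χ b) (φ b))) ∧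
    ((∃ a : M, φ a = χ a) → φ = χ) := by
  -- equality transfers
  have hE : ∀ a b : M, φ a = χ a → φ b = χ b := by
    intro a b hab
    rcases MagnitudeSpace.trichotomy (φ b) (χ b) with ⟨h1, _, _⟩ | ⟨_, h2, _⟩ | ⟨_, _, h3⟩
    · -- mlt (χ b) (φ b)
      exact absurd h1 (fun h => key_lemma harch harch' φ χ hφ hχ (Or.inr hab) h)
    · exact h2
    · -- mlt (φ b) (χ b)
      exact absurd h3 (fun h => key_lemma harch harch' χ φ hχ hφ (Or.inr hab.symm) h)
  -- strict transfers
  have hP : ∀ a b : M, mlt (φ a) (χ a) → mlt (φ b) (χ b) := by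
    intro a b hab
    rcases MagnitudeSpace.trichotomy (φ b) (χ b) with ⟨h1, _, _⟩ | ⟨_, h2, _⟩ | ⟨_, _, h3⟩
    · -- mlt (χ b) (φ b) : contradiction with key_lemma
      exact absurd (key_lemma harch harch' φ χ hφ hχ (Or.inl hab) h1) id
    · -- φ b = χ b, so φ a = χ a, contradicting strictness
      exfalso
      have h := hE b a h2
      rw [h] at hab
      exact mlt_irrefl (χ a) hab
    · exact h3
  have hN : ∀ a b : M, mlt (χ a) (φ a) → mlt (χ b) (φ b) := by
    intro a b hab
    rcases MagnitudeSpace.trichotomy (φ b) (χ b) with ⟨h1, _, _⟩ | ⟨_, h2, _⟩ | ⟨_, _, h3⟩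
    · exact h1
    · exfalso
      have := hE b a h2
      rw [this] at hab
      exact mlt_irrefl (χ a) hab
    · exact absurd (key_lemma harch harch' χ φ hχ hφ (Or.inl hab) h3) id
  constructor
  · intro a b
    exact ⟨⟨hP a b, hP b a⟩, ⟨hE a b, hE b a⟩, ⟨hN a b, hN b a⟩⟩
  · rintro ⟨a, hab⟩
    funext x
    exact hE a x hab
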